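/- arXiv:2106.10008 — 2 statements merged into one kernel-verified Lean document; each statement's English description precedes it below -/
import Mathlib

section
/- Let M = 1 + x^a(x+1)^b be a Mersenne prime and let h >= 1 be an integer. Then alpha_l(sigma(M^(2h))) = alpha_l(M^(2h)) for every l with 1 <= l <= a+b-1, and alpha_l(sigma(M^(2h))) = alpha_l(M^(2h) + M^(2h-1)) for every l with a+b <= l <= 2(a+b)-1. -/
/-!
As `M` has degree `d = a + b > 0`, the summands of `1 + M + ⋯ + M^n` have degrees
`0, d, …, n d`, and everything below `M^n` has degree at most `(n - 1) d`. So the `d` leading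
coefficients of `σ(M^n)` come from `M^n` alone, and the `2 d` leading ones from `M^n + M^(n-1)`.
-/

open Polynomial

/-- `alpha l S` is the coefficient of `x^(deg S - l)` in `S`. -/
noncomputable def alpha (l : ℕ) (S : Polynomial (ZMod 2)) : ZMod 2 :=
  S.coeff (S.natDegree - l)

/-- `sigmaPow P n = 1 + P + ⋯ + P^n`, the sum of divisors of `P^n` for `P` irreducible. -/
noncomputable def sigmaPow (P : Polynomial (ZMod 2)) (n : ℕ) : Polynomial (ZMod 2) :=
  ∑ i ∈ Finset.range (n + 1), P ^ i

theorem natDegree_one_add_X_pow_mul_X_add_one_pow {R : Type*} [Semiring R] [Nontrivial R]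
    {a b : ℕ} (hab : 0 < a + b) : (1 + X ^ a * (X + 1) ^ b : R[X]).natDegree = a + b := by
  compute_degree!
  simp [show ¬(a = 0 ∧ b = 0) by omega]

section SigmaPow

variable {P : Polynomial (ZMod 2)}

theorem sigmaPow_succ (n : ℕ) : sigmaPow P (n + 1) = sigmaPow P n + P ^ (n + 1) :=
  Finset.sum_range_succ _ _

theorem natDegree_sigmaPow_le (n : ℕ) :
    (sigmaPow P n).natDegree ≤ n * P.natDegree :=
  natDegree_sum_le_of_forall_le _ _ fun _ hi =>
    natDegree_pow_le.trans (Nat.mul_le_mul_right _ (Nat.lt_succ_iff.mp (Finset.mem_range.mp hi)))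

theorem natDegree_sigmaPow (hP : 0 < P.natDegree) (n : ℕ) :
    (sigmaPow P n).natDegree = n * P.natDegree := by
  cases n with
  | zero => simp [sigmaPow]
  | succ n =>
    rw [sigmaPow_succ, natDegree_add_eq_right_of_natDegree_lt] <;> rw [natDegree_pow]
    exact (natDegree_sigmaPow_le n).trans_lt (Nat.mul_lt_mul_of_pos_right n.lt_succ_self hP)

theorem coeff_sigmaPow_succ_of_lt {n k : ℕ} (hk : n * P.natDegree < k) :
    (sigmaPow P (n + 1)).coeff k = (P ^ (n + 1)).coeff k := by
  rw [sigmaPow_succ, coeff_add,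
    coeff_eq_zero_of_natDegree_lt ((natDegree_sigmaPow_le n).trans_lt hk), zero_add]

theorem coeff_sigmaPow_add_two_of_lt {n k : ℕ} (hk : n * P.natDegree < k) :
    (sigmaPow P (n + 2)).coeff k = (P ^ (n + 2) + P ^ (n + 1)).coeff k := by
  rw [sigmaPow_succ, coeff_add, coeff_sigmaPow_succ_of_lt hk, coeff_add, add_comm]

theorem alpha_sigmaPow_succ {l : ℕ} (hl : l < P.natDegree) (n : ℕ) :
    alpha l (sigmaPow P (n + 1)) = alpha l (P ^ (n + 1)) := by
  have hP : 0 < P.natDegree := by omega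
  rw [alpha, alpha, natDegree_sigmaPow hP, natDegree_pow, coeff_sigmaPow_succ_of_lt]
  rw [Nat.succ_mul]
  omega

theorem alpha_sigmaPow_add_two {l : ℕ} (hl : l < 2 * P.natDegree) (n : ℕ) :
    alpha l (sigmaPow P (n + 2)) = alpha l (P ^ (n + 2) + P ^ (n + 1)) := by
  have hP : 0 < P.natDegree := by omega
  have hdeg : (P ^ (n + 2) + P ^ (n + 1)).natDegree = (n + 2) * P.natDegree := by
    rw [natDegree_add_eq_left_of_natDegree_lt, natDegree_pow]
    rw [natDegree_pow, natDegree_pow]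
    exact Nat.mul_lt_mul_of_pos_right (by omega) hP
  rw [alpha, alpha, natDegree_sigmaPow hP, hdeg, coeff_sigmaPow_add_two_of_lt]
  rw [add_mul]
  omega

end SigmaPow

theorem stmt_2_general
    (a b h : ℕ) (ha : 1 ≤ a) (hh : 1 ≤ h)
    (M : Polynomial (ZMod 2)) (hM : M = 1 + X ^ a * (X + 1) ^ b) :
    (∀ l, 1 ≤ l → l ≤ a + b - 1 →
      alpha l (sigmaPow M (2 * h)) = alpha l (M ^ (2 * h))) ∧
    (∀ l, a + b ≤ l → l ≤ 2 * (a + b) - 1 →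
      alpha l (sigmaPow M (2 * h)) = alpha l (M ^ (2 * h) + M ^ (2 * h - 1))) := by
  have hdeg : M.natDegree = a + b := hM ▸ natDegree_one_add_X_pow_mul_X_add_one_pow (by omega)
  obtain ⟨k, rfl⟩ : ∃ k, h = k + 1 := ⟨h - 1, by omega⟩
  refine ⟨fun l _ hl => ?_, fun l _ hl => ?_⟩
  · rw [show 2 * (k + 1) = 2 * k + 1 + 1 by ring]
    exact alpha_sigmaPow_succ (by omega) _
  · rw [show 2 * (k + 1) = 2 * k + 2 by ring, show 2 * k + 2 - 1 = 2 * k + 1 by omega]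
    exact alpha_sigmaPow_add_two (by omega) _

theorem stmt_2
    (a b h : ℕ) (ha : 1 ≤ a) (hb : 1 ≤ b) (hh : 1 ≤ h)
    (M : Polynomial (ZMod 2)) (hM : M = 1 + X ^ a * (X + 1) ^ b)
    (hMirr : Irreducible M) :
    (∀ l, 1 ≤ l → l ≤ a + b - 1 →
      alpha l (sigmaPow M (2 * h)) = alpha l (M ^ (2 * h))) ∧
    (∀ l, a + b ≤ l → l ≤ 2 * (a + b) - 1 →
      alpha l (sigmaPow M (2 * h)) = alpha l (M ^ (2 * h) + M ^ (2 * h - 1))) :=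
  stmt_2_general a b h ha hh M hM
end

section
/- Assume W != 0, c is even, and let m be the least odd positive integer with alpha_m(W) = 1 (assumed to exist). If c < a+b, a+b is odd, and c + m > a+b, then alpha_{a+b-c}(R) = 1. -/
open Polynomial

/-!
Both `U` and `σ(M^{2h})` are monic of degree `N = 2h(a+b)` (the degree of `U` is read off the
factorisation of `σ(M^{2h})`), so `deg W = N - c`, while `deg σ(M^{2h-1}) = N - (a+b) < deg W`.
Hence `R` and `W` have the same degree, and `α_{a+b-c}(R)` is the leading coefficient `1` of
`σ(M^{2h-1})` plus `α_{a+b-c}(W)`. The latter vanishes because `a+b-c` is odd, positive and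
smaller than `m`.
-/

theorem Polynomial.IsMonicOfDegree.prod {R ι : Type*} [CommSemiring R] {s : Finset ι}
    {f : ι → R[X]} {d : ι → ℕ} (hf : ∀ i ∈ s, IsMonicOfDegree (f i) (d i)) :
    IsMonicOfDegree (∏ i ∈ s, f i) (∑ i ∈ s, d i) := by
  induction s using Finset.cons_induction with
  | empty => simp
  | cons i s hi ih =>
    rw [Finset.prod_cons, Finset.sum_cons]
    exact (hf i (Finset.mem_cons_self i s)).mul
      (ih fun j hj => hf j (Finset.mem_cons_of_mem hj))

section MersenneShape

variable {R : Type*} [Semiring R] [Nontrivial R]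

theorem isMonicOfDegree_X_pow_mul_X_add_one_pow (a b : ℕ) :
    IsMonicOfDegree ((X : R[X]) ^ a * (X + 1) ^ b) (a + b) := by
  simpa using (isMonicOfDegree_X_pow R a).mul ((isMonicOfDegree_X_add_one (1 : R)).pow b)

theorem isMonicOfDegree_one_add_X_pow_mul_X_add_one_pow {a b : ℕ} (hab : a + b ≠ 0) :
    IsMonicOfDegree ((1 : R[X]) + X ^ a * (X + 1) ^ b) (a + b) :=
  (isMonicOfDegree_X_pow_mul_X_add_one_pow a b).add_left
    (natDegree_one.trans_lt (Nat.pos_of_ne_zero hab))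

end MersenneShape

theorem isMonicOfDegree_prod_one_add_X_pow_mul_X_add_one_pow {R ι : Type*} [CommSemiring R]
    [Nontrivial R] {J : Finset ι} {a : ι → ℕ} (b : ι → ℕ) (ha : ∀ j ∈ J, 1 ≤ a j) :
    IsMonicOfDegree (∏ j ∈ J, ((1 : R[X]) + X ^ a j * (X + 1) ^ b j))
      (∑ j ∈ J, a j + ∑ j ∈ J, b j) := by
  rw [← Finset.sum_add_distrib]
  exact .prod fun j hj =>
    isMonicOfDegree_one_add_X_pow_mul_X_add_one_pow (by have := ha j hj; omega)

theorem isMonicOfDegree_sigmaPow {P : Polynomial (ZMod 2)} {d : ℕ} (hP : IsMonicOfDegree P d)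
    (hd : 0 < d) (n : ℕ) : IsMonicOfDegree (sigmaPow P n) (n * d) := by
  induction n with
  | zero => simp [sigmaPow]
  | succ n ih =>
    rw [sigmaPow, Finset.sum_range_succ, mul_comm]
    refine (hP.pow (n + 1)).add_left ?_
    rw [← sigmaPow, ih.natDegree_eq, mul_comm]
    exact Nat.mul_lt_mul_of_pos_left n.lt_succ_self hd

theorem alpha_add_of_natDegree_lt {Q S : Polynomial (ZMod 2)} (l : ℕ)
    (h : Q.natDegree < S.natDegree) :
    alpha l (Q + S) = Q.coeff (S.natDegree - l) + alpha l S := by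
  rw [alpha, alpha, natDegree_add_eq_right_of_natDegree_lt h, coeff_add]

theorem alpha_eq_zero_of_lt_least {S : Polynomial (ZMod 2)} {m k : ℕ}
    (hmin : ∀ k, Odd k → 0 < k → alpha k S = 1 → m ≤ k) (hk : Odd k) (hkm : k < m) :
    alpha k S = 0 := by
  have hne : alpha k S ≠ 1 := fun h1 => (hmin k hk hk.pos h1).not_gt hkm
  have zmod_two : ∀ x : ZMod 2, x ≠ 1 → x = 0 := by decide
  exact zmod_two _ hne

theorem stmt_17_general
    (h a b : ℕ) (hh : 2 ≤ h)
    (M : Polynomial (ZMod 2)) (hM : M = 1 + X ^ a * (X + 1) ^ b)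
    (J : Finset ℕ) (aj bj : ℕ → ℕ)
    (haj : ∀ j ∈ J, 1 ≤ aj j)
    (hfact : sigmaPow M (2 * h) = ∏ j ∈ J, (1 + X ^ aj j * (X + 1) ^ bj j))
    (u v : ℕ) (hu : u = ∑ j ∈ J, aj j) (hv : v = ∑ j ∈ J, bj j)
    (U W R : Polynomial (ZMod 2)) (c : ℕ)
    (hU : U = X ^ u * (X + 1) ^ v)
    (hW : W = U + sigmaPow M (2 * h) + 1)
    (hc : c = 2 * h * (a + b) - W.natDegree)
    (hR : R = sigmaPow M (2 * h - 1) + W)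
    (hceven : Even c)
    (m : ℕ)
    (hmleast : ∀ k, Odd k → 0 < k → alpha k W = 1 → m ≤ k)
    (hcab : c < a + b) (habodd : Odd (a + b)) (hcm : a + b < c + m) :
    alpha (a + b - c) R = 1 := by
  set N := 2 * h * (a + b)
  have hMdeg : IsMonicOfDegree M (a + b) :=
    hM ▸ isMonicOfDegree_one_add_X_pow_mul_X_add_one_pow (by omega)
  have hσ : IsMonicOfDegree (sigmaPow M (2 * h)) N := isMonicOfDegree_sigmaPow hMdeg (by omega) _
  have hσ' := isMonicOfDegree_sigmaPow hMdeg (by omega) (2 * h - 1)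
  have hσ'd : (sigmaPow M (2 * h - 1)).natDegree = N - (a + b) := by
    rw [hσ'.natDegree_eq, Nat.sub_mul, one_mul]
  have hUd : U.natDegree = N := by
    have hprod := isMonicOfDegree_prod_one_add_X_pow_mul_X_add_one_pow (R := ZMod 2) bj haj
    rw [← hfact, ← hu, ← hv] at hprod
    rw [hU, (isMonicOfDegree_X_pow_mul_X_add_one_pow u v).natDegree_eq, ← hprod.natDegree_eq,
      hσ.natDegree_eq]
  have hWd : W.natDegree = N - c := by
    have : W.natDegree ≤ N := hW ▸ natDegree_add_le_of_degree_le
      (natDegree_add_le_of_degree_le hUd.le hσ.natDegree_eq.le)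
      (natDegree_one.trans_le (Nat.zero_le _))
    omega
  have hαW : alpha (a + b - c) W = 0 := alpha_eq_zero_of_lt_least hmleast
    ((Nat.odd_sub hcab.le).mpr (iff_of_true habodd hceven)) (by omega)
  have hNab : a + b ≤ N := Nat.le_mul_of_pos_left _ (by omega)
  rw [hR, alpha_add_of_natDegree_lt _ (by omega), hαW, add_zero, hWd,
    show N - c - (a + b - c) = N - (a + b) by omega, ← hσ'd]
  exact hσ'.monic.coeff_natDegree

theorem stmt_17
    (h a b : ℕ) (hh : 2 ≤ h) (hp : Nat.Prime (2 * h + 1))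
    (ha : 1 ≤ a) (hb : 1 ≤ b) (hab5 : 5 ≤ a + b)
    (M : Polynomial (ZMod 2)) (hM : M = 1 + X ^ a * (X + 1) ^ b)
    (hMirr : Irreducible M)
    (J : Finset ℕ) (aj bj : ℕ → ℕ)
    (haj : ∀ j ∈ J, 1 ≤ aj j) (hbj : ∀ j ∈ J, 1 ≤ bj j)
    (hMjirr : ∀ j ∈ J, Irreducible (1 + X ^ aj j * (X + 1) ^ bj j : Polynomial (ZMod 2)))
    (hdistinct : ∀ i ∈ J, ∀ j ∈ J, i ≠ j →
      (1 + X ^ aj i * (X + 1) ^ bj i : Polynomial (ZMod 2)) ≠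
        1 + X ^ aj j * (X + 1) ^ bj j)
    (hfact : sigmaPow M (2 * h) = ∏ j ∈ J, (1 + X ^ aj j * (X + 1) ^ bj j))
    (u v : ℕ) (hu : u = ∑ j ∈ J, aj j) (hv : v = ∑ j ∈ J, bj j)
    (U W R : Polynomial (ZMod 2)) (c : ℕ)
    (hU : U = X ^ u * (X + 1) ^ v)
    (hW : W = U + sigmaPow M (2 * h) + 1)
    (hc : c = 2 * h * (a + b) - W.natDegree)
    (hR : R = sigmaPow M (2 * h - 1) + W)
    (hW0 : W ≠ 0) (hceven : Even c)
    (m : ℕ) (hmodd : Odd m) (hmpos : 0 < m) (hmW : alpha m W = 1)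
    (hmleast : ∀ k, Odd k → 0 < k → alpha k W = 1 → m ≤ k)
    (hcab : c < a + b) (habodd : Odd (a + b)) (hcm : a + b < c + m) :
    alpha (a + b - c) R = 1 :=
  stmt_17_general h a b hh M hM J aj bj haj hfact u v hu hv U W R c hU hW hc hR hceven m hmleast
    hcab habodd hcm
end
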